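/- arXiv:math/0309147 — 6 statements merged into one kernel-verified Lean document; each statement's English description precedes it below -/
import Mathlib

section
/- For all integers j ≥ 1 and n ≥ 0, the Kailath–Segall polynomial A_{(j,1,…,1)} (with n ones following j) satisfies the closed formula A_{(j,1,…,1)} = x_j·A^{(n)} + Σ_{k=1}^{n} (−1)^k ([n]_q!/[n−k]_q!)·(x_{j+k} + r_{j+k}·1)·A^{(n−k)}, where r_{j+k}·1 denotes the scalar r_{j+k} times the unit of the free algebra. -/
open scoped BigOperators

/-- The Kailath–Segall polynomials `A_u` in the free unital `ℝ`-algebra on indeterminates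
`x₀, x₁, x₂, …` (only `x_i` with `i ≥ 1` occur), indexed by finite sequences `u` of positive
integers, defined by the recursion `A_∅ = 1`, `A_{(i)} = x_i`, and
`A_{(j,u)} = x_j·A_u − Σᵢ q^{i−1} r_{j+u(i)} A_{u∖u(i)} − Σᵢ q^{i−1} A_{(j+u(i), u∖u(i))}`. -/
noncomputable def kailathSegall (q : ℝ) (r : ℕ → ℝ) : List ℕ → FreeAlgebra ℝ ℕ
  | [] => 1
  | j :: u =>
      FreeAlgebra.ι ℝ j * kailathSegall q r u
        - ∑ i : Fin u.length,
            (q ^ (i : ℕ) * r (j + u.get i)) • kailathSegall q r (u.eraseIdx i)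
        - ∑ i : Fin u.length,
            q ^ (i : ℕ) • kailathSegall q r ((j + u.get i) :: u.eraseIdx i)
  termination_by l => l.length
  decreasing_by
  all_goals
    first
      | (simp only [List.length_cons]; omega)
      | (have hi := i.isLt
         simp only [List.length_cons, List.length_eraseIdx_of_lt hi]
         omega)

/-- The `q`-integer `[n]_q = 1 + q + ⋯ + q^{n−1}` (with `[0]_q = 0`). -/
noncomputable def qInt (q : ℝ) (n : ℕ) : ℝ := ∑ i ∈ Finset.range n, q ^ i

/-- The ratio of `q`-factorials `[n]_q!/[n−k]_q! = Π_{i=n−k+1}^{n} [i]_q`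
(an empty product being `1`). -/
noncomputable def qFactRatio (q : ℝ) (n k : ℕ) : ℝ :=
  ∏ i ∈ Finset.Icc (n - k + 1) n, qInt q i


lemma eraseIdx_replicate (n i : ℕ) (h : i < n + 1) (a : ℕ) :
    (List.replicate (n+1) a).eraseIdx i = List.replicate n a := by
  induction n generalizing i with
  | zero => interval_cases i <;> simp
  | succ n ih =>
    cases i with
    | zero => simp [List.replicate_succ]
    | succ i => simpa [List.replicate_succ] using ih i (by omega)

lemma ks_step (q : ℝ) (r : ℕ → ℝ) (j n : ℕ) :
    kailathSegall q r (j :: List.replicate (n+1) 1) =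
      FreeAlgebra.ι ℝ j * kailathSegall q r (List.replicate (n+1) 1)
        - (qInt q (n+1) * r (j+1)) • kailathSegall q r (List.replicate n 1)
        - qInt q (n+1) • kailathSegall q r ((j+1) :: List.replicate n 1) := by
  rw [kailathSegall]
  have hget : ∀ i : Fin (List.replicate (n+1) 1).length,
      (List.replicate (n+1) 1).get i = 1 := fun i => List.getElem_replicate ..
  have herase : ∀ i : Fin (List.replicate (n+1) 1).length,
      (List.replicate (n+1) 1).eraseIdx i = List.replicate n 1 := fun i =>
    eraseIdx_replicate n i (by simpa using i.isLt) 1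
  simp only [hget, herase, ← Finset.sum_smul]
  have hs1 : ∑ i : Fin (List.replicate (n+1) 1).length, q ^ (i:ℕ) * r (j+1)
      = qInt q (n+1) * r (j+1) := by
    rw [← Finset.sum_mul, Fin.sum_univ_eq_sum_range]
    simp [qInt]
  have hs2 : ∑ i : Fin (List.replicate (n+1) 1).length, q ^ (i:ℕ) = qInt q (n+1) := by
    rw [Fin.sum_univ_eq_sum_range]
    simp [qInt]
  rw [hs1, hs2]

lemma sum_Icc1 {M : Type*} [AddCommMonoid M] (n : ℕ) (f : ℕ → M) :
    ∑ k ∈ Finset.Icc 1 n, f k = ∑ k ∈ Finset.range n, f (k+1) := by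
  induction n with
  | zero => simp
  | succ n ih => rw [Finset.sum_Icc_succ_top (by omega), ih, Finset.sum_range_succ]

lemma qfr_succ (q : ℝ) (n k : ℕ) :
    qFactRatio q (n+1) (k+1) = qInt q (n+1) * qFactRatio q n k := by
  unfold qFactRatio
  rw [Nat.succ_sub_succ, Finset.prod_Icc_succ_top (by omega), mul_comm]

lemma qfr_one (q : ℝ) (n : ℕ) : qFactRatio q (n+1) 1 = qInt q (n+1) := by
  simp [qfr_succ, qFactRatio]

lemma ks_nil (q : ℝ) (r : ℕ → ℝ) : kailathSegall q r [] = 1 := by rw [kailathSegall]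

lemma ks_single (q : ℝ) (r : ℕ → ℝ) (j : ℕ) :
    kailathSegall q r [j] = FreeAlgebra.ι ℝ j := by
  rw [kailathSegall]; simp [ks_nil]

/-- For all integers `j ≥ 1` and `n ≥ 0`, the Kailath–Segall polynomial
`A_{(j,1,…,1)}` (with `n` ones following `j`) satisfies
`A_{(j,1,…,1)} = x_j·A^{(n)} + Σ_{k=1}^{n} (−1)^k ([n]_q!/[n−k]_q!)·(x_{j+k} + r_{j+k}·1)·A^{(n−k)}`,
where `A^{(n)} = A_{(1,…,1)}` (`n` ones). -/
theorem kailathSegall_closed_formula (q : ℝ) (r : ℕ → ℝ) (j : ℕ) (hj : 1 ≤ j) (n : ℕ) :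
    kailathSegall q r (j :: List.replicate n 1) =
      FreeAlgebra.ι ℝ j * kailathSegall q r (List.replicate n 1)
        + ∑ k ∈ Finset.Icc 1 n,
            ((-1 : ℝ) ^ k * qFactRatio q n k) •
              ((FreeAlgebra.ι ℝ (j + k) + algebraMap ℝ (FreeAlgebra ℝ ℕ) (r (j + k)))
                * kailathSegall q r (List.replicate (n - k) 1)) := by
  induction n generalizing j with
  | zero => simp [ks_single, ks_nil]
  | succ n ih =>
    rw [ks_step, ih (j+1) (by omega), sum_Icc1, sum_Icc1, Finset.sum_range_succ']
    have hterm : ∀ i ∈ Finset.range n,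
        ((-1 : ℝ) ^ (i+1+1) * qFactRatio q (n+1) (i+1+1)) •
          ((FreeAlgebra.ι ℝ (j + (i+1+1)) + algebraMap ℝ (FreeAlgebra ℝ ℕ) (r (j + (i+1+1))))
            * kailathSegall q r (List.replicate (n+1 - (i+1+1)) 1))
        = -(qInt q (n+1) •
            (((-1 : ℝ) ^ (i+1) * qFactRatio q n (i+1)) •
              ((FreeAlgebra.ι ℝ (j+1 + (i+1)) + algebraMap ℝ (FreeAlgebra ℝ ℕ) (r (j+1 + (i+1))))
                * kailathSegall q r (List.replicate (n - (i+1)) 1)))) := by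
      intro i _
      rw [smul_smul, ← neg_smul]
      have h1 : j + (i+1+1) = j+1+(i+1) := by omega
      have h2 : n+1 - (i+1+1) = n - (i+1) := by omega
      rw [h1, h2, qfr_succ]
      ring_nf
    rw [Finset.sum_congr rfl hterm]
    have hg1 : ((-1 : ℝ) ^ (0+1) * qFactRatio q (n+1) (0+1)) •
          ((FreeAlgebra.ι ℝ (j + (0+1)) + algebraMap ℝ (FreeAlgebra ℝ ℕ) (r (j + (0+1))))
            * kailathSegall q r (List.replicate (n+1 - (0+1)) 1))
        = -((qInt q (n+1) * r (j+1)) • kailathSegall q r (List.replicate n 1))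
          - qInt q (n+1) • (FreeAlgebra.ι ℝ (j+1) * kailathSegall q r (List.replicate n 1)) := by
      rw [qfr_one]
      simp only [pow_one, neg_one_mul, neg_smul, add_mul, Nat.add_sub_cancel]
      rw [← Algebra.smul_def (r (j+1)) (kailathSegall q r (List.replicate n 1))]
      module
    rw [hg1, smul_add, Finset.smul_sum]
    rw [show ∀ (f : ℕ → FreeAlgebra ℝ ℕ), ∑ i ∈ Finset.range n, -f i = -∑ i ∈ Finset.range n, f i
      from fun f => Finset.sum_neg_distrib f]
    abel
end

section
/- Suppose r₁ = 0 and r_k = 1 for all k ≥ 2. Let φ be the unique ℝ-algebra homomorphism from the free algebra on x₁, x₂, x₃, … to the commutative polynomial ring ℝ[x] with φ(x_k) = x for every k ≥ 1. Then for every n ≥ 1, φ(A^{(n+1)}) = x·φ(A^{(n)}) − [n]_q·φ(A^{(n−1)}) − [n]_q·φ(A^{(n)}); that is, the images φ(A^{(n)}) satisfy the three-term recursion of the centered continuous big q-Hermite (q-Charlier) polynomials. -/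
open scoped BigOperators

lemma ks_cons (q : ℝ) (r : ℕ → ℝ) (j n : ℕ) :
    kailathSegall q r (j :: List.replicate n 1) =
      FreeAlgebra.ι ℝ j * kailathSegall q r (List.replicate n 1)
        - (∑ i ∈ Finset.range n, q ^ i * r (j + 1)) •
            kailathSegall q r (List.replicate (n - 1) 1)
        - (∑ i ∈ Finset.range n, q ^ i) •
            kailathSegall q r ((j + 1) :: List.replicate (n - 1) 1) := by
  rw [kailathSegall]
  have herase : ∀ i : Fin (List.replicate n (1:ℕ)).length,
      (List.replicate n (1:ℕ)).eraseIdx i = List.replicate (n-1) 1 := by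
    intro i
    have hi := i.isLt
    simp only [List.length_replicate] at hi
    rw [List.eraseIdx_replicate]
    simp [if_pos hi]
  simp only [herase, List.get_eq_getElem, List.getElem_replicate]
  rw [← Finset.sum_smul, ← Finset.sum_smul, Fin.sum_univ_eq_sum_range
    (fun i => q ^ i * r (j + 1)), Fin.sum_univ_eq_sum_range (fun i => q ^ i)]
  simp [List.length_replicate]

lemma phi_ks_indep (q : ℝ) (r : ℕ → ℝ)
    (hr : ∀ k : ℕ, 2 ≤ k → r k = 1)
    (φ : FreeAlgebra ℝ ℕ →ₐ[ℝ] Polynomial ℝ)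
    (hφ : ∀ k : ℕ, 1 ≤ k → φ (FreeAlgebra.ι ℝ k) = Polynomial.X) :
    ∀ m : ℕ, ∀ j : ℕ, 1 ≤ j →
      φ (kailathSegall q r (j :: List.replicate m 1)) =
        φ (kailathSegall q r (1 :: List.replicate m 1)) := by
  intro m
  induction m with
  | zero =>
    intro j hj
    rw [ks_cons q r j 0, ks_cons q r 1 0]
    simp [hφ j hj, hφ 1 le_rfl]
  | succ m ih =>
    intro j hj
    rw [ks_cons q r j (m+1), ks_cons q r 1 (m+1)]
    simp only [map_sub, map_mul, map_smul, Nat.add_sub_cancel]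
    rw [hφ j hj, hφ 1 le_rfl, hr (j + 1) (by omega), hr (1 + 1) (by omega),
      ih (j + 1) (by omega), ih (1 + 1) (by omega)]

/-- Suppose `r₁ = 0` and `r_k = 1` for all `k ≥ 2`.  Let `φ` be the (unique)
`ℝ`-algebra homomorphism from the free algebra to `ℝ[x]` with `φ(x_k) = x` for every `k ≥ 1`.
Then for every `n ≥ 1`,
`φ(A^{(n+1)}) = x·φ(A^{(n)}) − [n]_q·φ(A^{(n−1)}) − [n]_q·φ(A^{(n)})`; that is, the images
`φ(A^{(n)})` satisfy the three-term recursion of the centered continuous big `q`-Hermite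
(`q`-Charlier) polynomials. -/
theorem kailathSegall_qPoisson_qCharlier (q : ℝ) (r : ℕ → ℝ)
    (hr1 : r 1 = 0) (hr : ∀ k : ℕ, 2 ≤ k → r k = 1)
    (φ : FreeAlgebra ℝ ℕ →ₐ[ℝ] Polynomial ℝ)
    (hφ : ∀ k : ℕ, 1 ≤ k → φ (FreeAlgebra.ι ℝ k) = Polynomial.X)
    (n : ℕ) (hn : 1 ≤ n) :
    φ (kailathSegall q r (List.replicate (n + 1) 1)) =
      Polynomial.X * φ (kailathSegall q r (List.replicate n 1))
        - Polynomial.C (qInt q n) * φ (kailathSegall q r (List.replicate (n - 1) 1))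
        - Polynomial.C (qInt q n) * φ (kailathSegall q r (List.replicate n 1)) := by
  have hrep : ∀ m : ℕ, List.replicate (m + 1) (1:ℕ) = 1 :: List.replicate m 1 := by
    intro m; rfl
  rw [hrep n, ks_cons]
  simp only [map_sub, map_mul, map_smul, Nat.add_sub_cancel]
  rw [hφ 1 le_rfl, hr 2 le_rfl, phi_ks_indep q r hr φ hφ (n - 1) 2 (by omega)]
  have h1 : (1 : ℕ) :: List.replicate (n - 1) 1 = List.replicate n 1 := by
    rw [← hrep (n - 1)]; congr 1; omega
  rw [h1]
  simp only [mul_one, qInt, Polynomial.smul_eq_C_mul]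
end

section
/- Let P, A, B be bounded linear operators on a complex Hilbert space H such that P is positive and P∘B = A†∘P, where A† denotes the Hilbert-space adjoint of A. Then for every ξ ∈ H, Re⟪Aξ, P(Aξ)⟫ ≤ ‖A‖·‖B‖·Re⟪ξ, Pξ⟫ (both inner products being real and nonnegative since P is positive). Consequently, A has norm at most √(‖A‖·‖B‖) with respect to the semi-inner product ⟪ξ, η⟫_P = ⟪ξ, Pη⟫. -/
open scoped ComplexConjugate

/-- Cauchy–Schwarz (real-part, squared form) for the semi-inner product `⟪x, P y⟫`
induced by a positive operator `P`. -/
private lemma gauge_aux_cs {H : Type*} [NormedAddCommGroup H] [InnerProductSpace ℂ H]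
    [CompleteSpace H] (P : H →L[ℂ] H) (hP : P.IsPositive) (x y : H) :
    ((inner ℂ x (P y) : ℂ).re)^2 ≤ (inner ℂ x (P x) : ℂ).re * (inner ℂ y (P y) : ℂ).re := by
  have herm : ∀ u v : H, (inner ℂ u (P v) : ℂ) = conj (inner ℂ v (P u) : ℂ) := fun u v => by
    rw [← inner_conj_symm, ← ContinuousLinearMap.adjoint_inner_right P, hP.isSelfAdjoint.adjoint_eq]
  have hnn : ∀ u : H, 0 ≤ (inner ℂ u (P u) : ℂ).re := fun u => by
    have := hP.2 u
    rwa [ContinuousLinearMap.reApplyInnerSelf_apply, inner_re_symm] at this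
  set a := (inner ℂ y (P y) : ℂ).re
  set b := 2 * (inner ℂ x (P y) : ℂ).re
  set c := (inner ℂ x (P x) : ℂ).re
  have key : ∀ t : ℝ, 0 ≤ a * (t * t) + b * t + c := by
    intro t
    have h0 := hnn (x + (t:ℂ) • y)
    have hexp : (inner ℂ (x + (t:ℂ)•y) (P (x + (t:ℂ)•y)) : ℂ).re
        = a * (t * t) + b * t + c := by
      rw [map_add, map_smul, inner_add_left, inner_add_right, inner_add_right,
        inner_smul_left, inner_smul_right, inner_smul_right, inner_smul_left]
      have h1 : (inner ℂ y (P x) : ℂ).re = (inner ℂ x (P y) : ℂ).re := by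
        rw [herm y x, Complex.conj_re]
      simp [Complex.add_re, Complex.mul_re, Complex.conj_re, Complex.conj_im,
        Complex.ofReal_re, Complex.ofReal_im, a, b, c]
      linear_combination t * h1
    linarith [h0, hexp.ge, hexp.le]
  have hd := discrim_le_zero key
  rw [discrim] at hd
  have hb : b = 2 * (inner ℂ x (P y) : ℂ).re := rfl
  rw [hb] at hd
  nlinarith [hd]

/-- Let `P, A, B` be bounded linear operators on a complex Hilbert space `H`
such that `P` is positive and `P ∘ B = A† ∘ P`.  Then for every `ξ ∈ H`,
`Re⟪Aξ, P(Aξ)⟫ ≤ ‖A‖·‖B‖·Re⟪ξ, Pξ⟫`; consequently `A` has norm at most `√(‖A‖·‖B‖)` with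
respect to the semi-inner product `⟪ξ, η⟫_P = ⟪ξ, Pη⟫`. -/
theorem gauge_operator_bound
    {H : Type*} [NormedAddCommGroup H] [InnerProductSpace ℂ H] [CompleteSpace H]
    (P A B : H →L[ℂ] H) (hP : P.IsPositive)
    (hPB : P.comp B = (ContinuousLinearMap.adjoint A).comp P) :
    ∀ ξ : H,
      (inner ℂ (A ξ) (P (A ξ)) : ℂ).re ≤ ‖A‖ * ‖B‖ * (inner ℂ ξ (P ξ) : ℂ).re ∧
      Real.sqrt ((inner ℂ (A ξ) (P (A ξ)) : ℂ).re)
        ≤ Real.sqrt (‖A‖ * ‖B‖) * Real.sqrt ((inner ℂ ξ (P ξ) : ℂ).re) := by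
  intro ξ
  have hnn : ∀ u : H, 0 ≤ (inner ℂ u (P u) : ℂ).re := fun u => by
    have := hP.2 u
    rwa [ContinuousLinearMap.reApplyInnerSelf_apply, inner_re_symm] at this
  have herm : ∀ u v : H, (inner ℂ u (P v) : ℂ) = conj (inner ℂ v (P u) : ℂ) := fun u v => by
    rw [← inner_conj_symm, ← ContinuousLinearMap.adjoint_inner_right P, hP.isSelfAdjoint.adjoint_eq]
  have hPB' : ∀ y : H, P (B y) = ContinuousLinearMap.adjoint A (P y) := fun y =>
    congrFun (congrArg DFunLike.coe hPB) y
  have key1 : ∀ x y : H, (inner ℂ x (P (B y)) : ℂ) = inner ℂ (A x) (P y) := fun x y => by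
    rw [hPB', ContinuousLinearMap.adjoint_inner_right]
  have keyB : ∀ x y : H, (inner ℂ (B x) (P y) : ℂ) = inner ℂ x (P (A y)) := fun x y => by
    rw [herm, key1, ← herm]
  set T : H →L[ℂ] H := B * A with hTdef
  have keyT : ∀ x y : H, (inner ℂ (T x) (P y) : ℂ) = inner ℂ x (P (T y)) := by
    intro x y
    show (inner ℂ (B (A x)) (P y) : ℂ) = inner ℂ x (P (B (A y)))
    rw [keyB, key1]
  have keyTn : ∀ (n : ℕ) (x y : H),
      (inner ℂ ((T^n) x) (P y) : ℂ) = inner ℂ x (P ((T^n) y)) := by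
    intro n
    induction n with
    | zero => intro x y; simp
    | succ n ih =>
      intro x y
      have hl : (T^(n+1)) x = (T^n) (T x) := by
        rw [pow_succ, ContinuousLinearMap.mul_apply]
      have hr : (T^(n+1)) y = T ((T^n) y) := by
        rw [pow_succ', ContinuousLinearMap.mul_apply]
      rw [hl, hr, ih, keyT]
  have hTn_norm : ∀ (n : ℕ) (x : H), ‖(T^n) x‖ ≤ ‖T‖^n * ‖x‖ := by
    intro n
    induction n with
    | zero => intro x; simp
    | succ n ih =>
      intro x
      have h1 : (T^(n+1)) x = T ((T^n) x) := by
        rw [pow_succ', ContinuousLinearMap.mul_apply]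
      calc ‖(T^(n+1)) x‖ = ‖T ((T^n) x)‖ := by rw [h1]
        _ ≤ ‖T‖ * ‖(T^n) x‖ := T.le_opNorm _
        _ ≤ ‖T‖ * (‖T‖^n * ‖x‖) := by
            exact mul_le_mul_of_nonneg_left (ih x) (norm_nonneg T)
        _ = ‖T‖^(n+1) * ‖x‖ := by ring
  set F := (inner ℂ ξ (P ξ) : ℂ).re with hFdef
  set C := ‖P‖ * ‖ξ‖^2 with hCdef
  set a : ℕ → ℝ := fun n => (inner ℂ ξ (P ((T^(2^n)) ξ)) : ℂ).re with hadef
  have ha_succ : ∀ n, a (n+1) = (inner ℂ ((T^(2^n)) ξ) (P ((T^(2^n)) ξ)) : ℂ).re := by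
    intro n
    have h1 : (T^(2^(n+1))) ξ = (T^(2^n)) ((T^(2^n)) ξ) := by
      have h2n : (2:ℕ)^(n+1) = 2^n + 2^n := by rw [pow_succ, mul_two]
      rw [h2n, pow_add, ContinuousLinearMap.mul_apply]
    show (inner ℂ ξ (P ((T^(2^(n+1))) ξ)) : ℂ).re = _
    rw [h1, ← keyTn]
  have ha0 : a 0 = (inner ℂ (A ξ) (P (A ξ)) : ℂ).re := by
    show (inner ℂ ξ (P ((T^(2^0)) ξ)) : ℂ).re = _
    rw [pow_zero, pow_one]
    show (inner ℂ ξ (P (B (A ξ))) : ℂ).re = _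
    rw [key1]
  have ha_nonneg : ∀ n, 0 ≤ a n := by
    intro n
    cases n with
    | zero => rw [ha0]; exact hnn _
    | succ n => rw [ha_succ]; exact hnn _
  have hF0 : 0 ≤ F := hnn ξ
  have hstep : ∀ n, (a n)^2 ≤ F * a (n+1) := by
    intro n
    have := gauge_aux_cs P hP ξ ((T^(2^n)) ξ)
    rw [← ha_succ] at this
    exact this
  have hbound : ∀ n, a n ≤ C * ‖T‖^(2^n) := by
    intro n
    calc a n ≤ ‖(inner ℂ ξ (P ((T^(2^n)) ξ)) : ℂ)‖ := by
          exact Complex.re_le_norm _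
      _ ≤ ‖ξ‖ * ‖P ((T^(2^n)) ξ)‖ := norm_inner_le_norm _ _
      _ ≤ ‖ξ‖ * (‖P‖ * ‖(T^(2^n)) ξ‖) := by
          exact mul_le_mul_of_nonneg_left (P.le_opNorm _) (norm_nonneg ξ)
      _ ≤ ‖ξ‖ * (‖P‖ * (‖T‖^(2^n) * ‖ξ‖)) :=
          mul_le_mul_of_nonneg_left
            (mul_le_mul_of_nonneg_left (hTn_norm (2^n) ξ) (norm_nonneg P))
            (norm_nonneg ξ)
      _ = C * ‖T‖^(2^n) := by rw [hCdef]; ring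
  have hmain : ∀ n, (a 0)^(2^n) ≤ F^(2^n - 1) * a n := by
    intro n
    induction n with
    | zero => simp
    | succ n ih =>
      have h1 : (a 0)^(2^(n+1)) = ((a 0)^(2^n))^2 := by
        rw [pow_succ, pow_mul]
      have h2 : ((a 0)^(2^n))^2 ≤ (F^(2^n - 1) * a n)^2 := by
        apply pow_le_pow_left₀ (pow_nonneg (ha_nonneg 0) _) ih
      have h3 : (F^(2^n - 1) * a n)^2 = F^(2^(n+1) - 2) * (a n)^2 := by
        rw [mul_pow, ← pow_mul]
        congr 2
        have h1n := Nat.one_le_two_pow (n := n)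
        have h2n : 2^(n+1) = 2^n * 2 := pow_succ 2 n
        omega
      have h4 : F^(2^(n+1) - 2) * (a n)^2 ≤ F^(2^(n+1) - 2) * (F * a (n+1)) :=
        mul_le_mul_of_nonneg_left (hstep n) (pow_nonneg hF0 _)
      have h5 : F^(2^(n+1) - 2) * (F * a (n+1)) = F^(2^(n+1) - 1) * a (n+1) := by
        rw [← mul_assoc, ← pow_succ]
        congr 2
        have h2le : (2:ℕ) ≤ 2^(n+1) := by
          calc (2:ℕ) = 2^1 := rfl
            _ ≤ 2^(n+1) := Nat.pow_le_pow_right (by norm_num) (by omega)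
        omega
      calc (a 0)^(2^(n+1)) = ((a 0)^(2^n))^2 := h1
        _ ≤ (F^(2^n - 1) * a n)^2 := h2
        _ = F^(2^(n+1) - 2) * (a n)^2 := h3
        _ ≤ F^(2^(n+1) - 2) * (F * a (n+1)) := h4
        _ = F^(2^(n+1) - 1) * a (n+1) := h5
  -- main estimate : a 0 ≤ ‖T‖ * F
  have main : a 0 ≤ ‖T‖ * F := by
    rcases eq_or_lt_of_le hF0 with hF | hFpos
    · -- F = 0
      have h1 := hstep 0
      rw [← hF] at h1
      have h2 : (a 0)^2 ≤ 0 := by simpa using h1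
      have h3 : a 0 = 0 := by nlinarith [sq_nonneg (a 0)]
      rw [h3, ← hF, mul_zero]
    · by_cases hT : ‖T‖ = 0
      · -- T = 0
        have hT0 : T = 0 := norm_eq_zero.mp hT
        have h1 : a 0 = 0 := by
          show (inner ℂ ξ (P ((T^(2^0)) ξ)) : ℂ).re = 0
          rw [hT0]
          simp
        rw [h1]
        positivity
      · have hTpos : 0 < ‖T‖ := lt_of_le_of_ne (norm_nonneg T) (Ne.symm hT)
        by_contra hcon
        push_neg at hcon
        set r := a 0 / (‖T‖ * F) with hrdef
        have hTF : 0 < ‖T‖ * F := mul_pos hTpos hFpos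
        have hr : 1 < r := (one_lt_div hTF).2 hcon
        have ha0eq : a 0 = r * (‖T‖ * F) := by
          rw [hrdef, div_mul_cancel₀ _ (ne_of_gt hTF)]
        have key2 : ∀ n, r^(2^n) * F ≤ C := by
          intro n
          set k := 2^n with hkdef
          have hk1 : 1 ≤ k := Nat.one_le_two_pow
          have h1 : (a 0)^k ≤ F^(k-1) * (C * ‖T‖^k) := by
            calc (a 0)^k ≤ F^(k-1) * a n := hmain n
              _ ≤ F^(k-1) * (C * ‖T‖^k) :=
                  mul_le_mul_of_nonneg_left (hbound n) (pow_nonneg hF0 _)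
          have h2 : (a 0)^k = r^k * ‖T‖^k * (F^(k-1) * F) := by
            rw [ha0eq, mul_pow, mul_pow, ← pow_succ]
            have : k - 1 + 1 = k := by omega
            rw [this]
            ring
          have hpos : 0 < ‖T‖^k * F^(k-1) := by positivity
          have h3 : (r^k * F) * (‖T‖^k * F^(k-1)) ≤ C * (‖T‖^k * F^(k-1)) := by
            calc (r^k * F) * (‖T‖^k * F^(k-1)) = r^k * ‖T‖^k * (F^(k-1) * F) := by ring
              _ = (a 0)^k := h2.symm
              _ ≤ F^(k-1) * (C * ‖T‖^k) := h1
              _ = C * (‖T‖^k * F^(k-1)) := by ring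
          exact le_of_mul_le_mul_right h3 hpos
        obtain ⟨m, hm⟩ := pow_unbounded_of_one_lt (C / F) hr
        have h4 : r^m ≤ r^(2^m) :=
          pow_le_pow_right₀ hr.le (Nat.le_of_lt (Nat.lt_two_pow_self (n := m)))
        have h5 : r^(2^m) * F ≤ C := key2 m
        have h6 : r^(2^m) ≤ C / F := (le_div_iff₀ hFpos).2 h5
        linarith
  -- conclusion
  have hTle : ‖T‖ ≤ ‖B‖ * ‖A‖ := norm_mul_le B A
  have goal1 : (inner ℂ (A ξ) (P (A ξ)) : ℂ).re ≤ ‖A‖ * ‖B‖ * F := by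
    rw [← ha0]
    calc a 0 ≤ ‖T‖ * F := main
      _ ≤ (‖B‖ * ‖A‖) * F := mul_le_mul_of_nonneg_right hTle hF0
      _ = ‖A‖ * ‖B‖ * F := by ring
  refine ⟨goal1, ?_⟩
  calc Real.sqrt ((inner ℂ (A ξ) (P (A ξ)) : ℂ).re)
      ≤ Real.sqrt (‖A‖ * ‖B‖ * F) := Real.sqrt_le_sqrt goal1
    _ = Real.sqrt (‖A‖ * ‖B‖) * Real.sqrt F := by
        rw [Real.sqrt_mul (by positivity)]
end

section
/- Let P and C be bounded linear operators on a complex Hilbert space H such that both P and the composition P∘C are positive (self-adjoint with nonnegative quadratic form). Then for every ξ ∈ H, Re⟪ξ, (P∘C)ξ⟫ ≤ ‖C‖·Re⟪ξ, Pξ⟫; equivalently, P∘C ≤ ‖C‖·P in the Loewner order on bounded self-adjoint operators. -/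
/-- Let `P` and `C` be bounded linear operators on a complex Hilbert space `H`
such that both `P` and `P ∘ C` are positive.  Then for every `ξ ∈ H`,
`Re⟪ξ, (P∘C)ξ⟫ ≤ ‖C‖·Re⟪ξ, Pξ⟫`, i.e. `P ∘ C ≤ ‖C‖·P` in the Loewner order. -/
theorem positive_comp_loewner_bound
    {H : Type*} [NormedAddCommGroup H] [InnerProductSpace ℂ H] [CompleteSpace H]
    (P C : H →L[ℂ] H) (hP : P.IsPositive) (hPC : (P.comp C).IsPositive) :
    ∀ ξ : H, (inner ℂ ξ ((P.comp C) ξ) : ℂ).re ≤ ‖C‖ * (inner ℂ ξ (P ξ) : ℂ).re := by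
  intro ξ
  have hPsym : (P : H →ₗ[ℂ] H).IsSymmetric :=
    ContinuousLinearMap.isSelfAdjoint_iff_isSymmetric.mp hP.isSelfAdjoint
  have hPCsym : ((P.comp C : H →L[ℂ] H) : H →ₗ[ℂ] H).IsSymmetric :=
    ContinuousLinearMap.isSelfAdjoint_iff_isSymmetric.mp hPC.isSelfAdjoint
  -- key adjoint relation: ⟪C x, P y⟫ = ⟪x, P (C y)⟫
  have hsa : ∀ x y : H, (inner ℂ (C x) (P y) : ℂ) = inner ℂ x (P (C y)) := by
    intro x y
    have h1 := hPsym (C x) y        -- ⟪P (C x), y⟫ = ⟪C x, P y⟫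
    have h2 := hPCsym x y           -- ⟪P (C x), y⟫ = ⟪x, P (C y)⟫
    simp only [ContinuousLinearMap.coe_coe, ContinuousLinearMap.comp_apply] at h1 h2
    rw [← h1, h2]
  -- iterated version
  have hsk : ∀ (k : ℕ) (x y : H), (inner ℂ ((C ^ k) x) (P y) : ℂ) = inner ℂ x (P ((C ^ k) y)) := by
    intro k
    induction k with
    | zero => intro x y; simp
    | succ n ih =>
      intro x y
      have e1 : (C ^ (n + 1)) x = (C ^ n) (C x) := by
        rw [pow_succ]; simp [ContinuousLinearMap.mul_apply]
      have e2 : (C ^ (n + 1)) y = C ((C ^ n) y) := by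
        rw [pow_succ']; simp [ContinuousLinearMap.mul_apply]
      rw [e1, ih (C x) y, hsa x ((C ^ n) y), ← e2]
  -- Cauchy–Schwarz for the semi-inner product induced by P
  let core : PreInnerProductSpace.Core ℂ H :=
    { inner := fun x y => inner ℂ x (P y)
      conj_inner_symm := fun x y => by
        show (starRingEnd ℂ) (inner ℂ y (P x) : ℂ) = inner ℂ x (P y)
        have h := hPsym x y
        simp only [ContinuousLinearMap.coe_coe] at h
        rw [← h]
        exact inner_conj_symm _ _
      re_inner_nonneg := fun x => hP.re_inner_nonneg_right x
      add_left := fun x y z => inner_add_left _ _ _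
      smul_left := fun x y r => inner_smul_left _ _ _ }
  have csq : ∀ x y : H,
      ((inner ℂ x (P y) : ℂ)).re ^ 2 ≤ (inner ℂ x (P x) : ℂ).re * (inner ℂ y (P y) : ℂ).re := by
    intro x y
    have h : ‖(inner ℂ x (P y) : ℂ)‖ * ‖(inner ℂ y (P x) : ℂ)‖ ≤
        (inner ℂ x (P x) : ℂ).re * (inner ℂ y (P y) : ℂ).re :=
      @InnerProductSpace.Core.inner_mul_inner_self_le ℂ H _ _ _ core x y
    have e : (inner ℂ y (P x) : ℂ) = (starRingEnd ℂ) (inner ℂ x (P y)) := by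
      have hxy := hPsym x y
      simp only [ContinuousLinearMap.coe_coe] at hxy
      rw [← hxy]
      exact (inner_conj_symm _ _).symm
    have hnorm : ‖(inner ℂ y (P x) : ℂ)‖ = ‖(inner ℂ x (P y) : ℂ)‖ := by
      rw [e, RCLike.norm_conj]
    have habs : |((inner ℂ x (P y) : ℂ)).re| ≤ ‖(inner ℂ x (P y) : ℂ)‖ := Complex.abs_re_le_norm _
    have h2 : ((inner ℂ x (P y) : ℂ)).re ^ 2 ≤ ‖(inner ℂ x (P y) : ℂ)‖ ^ 2 := by
      rw [← sq_abs]; exact pow_le_pow_left₀ (abs_nonneg _) habs 2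
    calc ((inner ℂ x (P y) : ℂ)).re ^ 2 ≤ ‖(inner ℂ x (P y) : ℂ)‖ ^ 2 := h2
      _ = ‖(inner ℂ x (P y) : ℂ)‖ * ‖(inner ℂ y (P x) : ℂ)‖ := by rw [hnorm]; ring
      _ ≤ (inner ℂ x (P x) : ℂ).re * (inner ℂ y (P y) : ℂ).re := h
  -- the sequence
  set b : ℕ → ℝ := fun k => ((inner ℂ ξ (P ((C ^ k) ξ)) : ℂ)).re with hb
  have hb0 : b 0 = (inner ℂ ξ (P ξ) : ℂ).re := by simp [hb]
  have hb1 : b 1 = (inner ℂ ξ ((P.comp C) ξ) : ℂ).re := by simp [hb]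
  have hCpow : ∀ (k : ℕ), (C ^ k) ((C ^ k) ξ) = (C ^ (2 * k)) ξ := by
    intro k; rw [two_mul, pow_add]; simp [ContinuousLinearMap.mul_apply]
  have key1 : ∀ k : ℕ, (b k) ^ 2 ≤ b 0 * b (2 * k) := by
    intro k
    have h := csq ξ ((C ^ k) ξ)
    have h2 : (inner ℂ ((C ^ k) ξ) (P ((C ^ k) ξ)) : ℂ) = inner ℂ ξ (P ((C ^ (2 * k)) ξ)) := by
      rw [hsk k ξ ((C ^ k) ξ), hCpow k]
    rw [h2] at h
    simpa [hb, hb0] using h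
  have key2 : ∀ k : ℕ, 0 ≤ b (2 * k) := by
    intro k
    have h := hP.re_inner_nonneg_right ((C ^ k) ξ)
    have h2 : (inner ℂ ((C ^ k) ξ) (P ((C ^ k) ξ)) : ℂ) = inner ℂ ξ (P ((C ^ (2 * k)) ξ)) := by
      rw [hsk k ξ ((C ^ k) ξ), hCpow k]
    rw [h2] at h
    exact h
  have key3 : 0 ≤ b 1 := by
    have := hPC.re_inner_nonneg_right ξ
    rw [hb1]; exact this
  have hb0nonneg : 0 ≤ b 0 := by rw [hb0]; exact hP.re_inner_nonneg_right ξ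
  -- norm bound
  have hCk : ∀ (k : ℕ) (x : H), ‖(C ^ k) x‖ ≤ ‖C‖ ^ k * ‖x‖ := by
    intro k
    induction k with
    | zero => intro x; simp
    | succ n ih =>
      intro x
      have e1 : (C ^ (n + 1)) x = (C ^ n) (C x) := by
        rw [pow_succ]; simp [ContinuousLinearMap.mul_apply]
      rw [e1]
      calc ‖(C ^ n) (C x)‖ ≤ ‖C‖ ^ n * ‖C x‖ := ih (C x)
        _ ≤ ‖C‖ ^ n * (‖C‖ * ‖x‖) := by
            have := C.le_opNorm x
            have hn : (0:ℝ) ≤ ‖C‖ ^ n := by positivity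
            nlinarith
        _ = ‖C‖ ^ (n + 1) * ‖x‖ := by ring
  set M : ℝ := ‖P‖ * ‖ξ‖ ^ 2 with hM
  have hbound : ∀ k : ℕ, b k ≤ M * ‖C‖ ^ k := by
    intro k
    calc b k ≤ ‖(inner ℂ ξ (P ((C ^ k) ξ)) : ℂ)‖ := Complex.re_le_norm _
      _ ≤ ‖ξ‖ * ‖P ((C ^ k) ξ)‖ := norm_inner_le_norm _ _
      _ ≤ ‖ξ‖ * (‖P‖ * ‖(C ^ k) ξ‖) := by
          gcongr
          exact P.le_opNorm ((C ^ k) ξ)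
      _ ≤ ‖ξ‖ * (‖P‖ * (‖C‖ ^ k * ‖ξ‖)) := by
          gcongr
          exact hCk k ξ
      _ = M * ‖C‖ ^ k := by rw [hM]; ring
  -- goal: b 1 ≤ ‖C‖ * b 0
  rw [← hb1, ← hb0]
  -- case b 0 = 0
  rcases eq_or_lt_of_le hb0nonneg with hb0eq | hb0pos
  · have h := key1 1
    rw [← hb0eq] at h
    have : b 1 ^ 2 ≤ 0 := by simpa using h
    have hb1z : b 1 = 0 := by nlinarith [key3]
    rw [hb1z, ← hb0eq]
    simp
  -- case ‖C‖ = 0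
  rcases eq_or_lt_of_le (norm_nonneg C) with hC0 | hCpos
  · have hCzero : C = 0 := by rwa [eq_comm, norm_eq_zero] at hC0
    have : b 1 = 0 := by
      rw [hb1, hCzero]; simp
    rw [this, ← hC0]
    simp
  -- main case: b 0 > 0, ‖C‖ > 0
  set r : ℝ := b 1 / b 0 with hr
  have hrnonneg : 0 ≤ r := div_nonneg key3 (le_of_lt hb0pos)
  have claim : ∀ n : ℕ, r ^ (2 ^ n) ≤ b (2 ^ n) / b 0 := by
    intro n
    induction n with
    | zero => simp [hr]
    | succ n ih =>
      have hpos : 0 ≤ r ^ (2 ^ n) := pow_nonneg hrnonneg _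
      have h2 : (r ^ (2 ^ n)) ^ 2 ≤ (b (2 ^ n) / b 0) ^ 2 := pow_le_pow_left₀ hpos ih 2
      have h3 : (b (2 ^ n)) ^ 2 ≤ b 0 * b (2 ^ (n + 1)) := by
        have := key1 (2 ^ n)
        rwa [← pow_succ'] at this  -- 2 * 2^n = 2^(n+1)
      calc r ^ (2 ^ (n + 1)) = (r ^ (2 ^ n)) ^ 2 := by rw [← pow_mul, pow_succ]
        _ ≤ (b (2 ^ n) / b 0) ^ 2 := h2
        _ = (b (2 ^ n)) ^ 2 / (b 0) ^ 2 := div_pow _ _ _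
        _ ≤ (b 0 * b (2 ^ (n + 1))) / (b 0) ^ 2 := by
            apply div_le_div_of_nonneg_right h3 ; positivity
        _ = b (2 ^ (n + 1)) / b 0 := by field_simp
  -- conclude r ≤ ‖C‖
  by_contra hcon
  push_neg at hcon
  have hrC : ‖C‖ < r := by
    rw [hr]; rw [lt_div_iff₀ hb0pos]; linarith [hcon]
  set s : ℝ := r / ‖C‖ with hs
  have hs1 : 1 < s := by
    rw [hs, lt_div_iff₀ hCpos]; linarith
  have hsn : ∀ n : ℕ, s ^ (2 ^ n) ≤ M / b 0 := by
    intro n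
    have h1 := claim n
    have h2 := hbound (2 ^ n)
    have h3 : b (2 ^ n) / b 0 ≤ M * ‖C‖ ^ (2 ^ n) / b 0 :=
      (div_le_div_iff_of_pos_right hb0pos).mpr h2
    have h4 : r ^ (2 ^ n) ≤ M * ‖C‖ ^ (2 ^ n) / b 0 := le_trans h1 h3
    rw [hs, div_pow, div_le_iff₀ (by positivity : (0:ℝ) < ‖C‖ ^ (2 ^ n))]
    calc r ^ (2 ^ n) ≤ M * ‖C‖ ^ (2 ^ n) / b 0 := h4
      _ = M / b 0 * ‖C‖ ^ (2 ^ n) := by ring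
  obtain ⟨n, hn⟩ := pow_unbounded_of_one_lt (M / b 0) hs1
  have hle : s ^ n ≤ s ^ (2 ^ n) :=
    pow_le_pow_right₀ (le_of_lt hs1) (le_of_lt Nat.lt_two_pow_self)
  have := hsn n
  linarith
end

section
/- For every set partition π of {1,…,n} and every subset S ⊆ π, the number of right restricted crossings satisfies rc(S,π) = rc(π) + Σ_{B∈S} #{ C ∈ π : min(C) < min(B) < max(C) }. -/
open scoped BigOperators

/-- The number of right restricted crossings of the extended partition `(S, π)` at the point
`k`:  if `k` lies in a block `B ∈ π` and is not the maximum of `B`, then with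
`j = min{ i ∈ B : i > k }` it is the number of blocks `C ∈ π` meeting `{k+1,…,j−1}` such that
`C ∈ S` or `C` meets `{1,…,k}`; it is `0` if `k = max B`. -/
noncomputable def rcAt (π S : Finset (Finset ℕ)) (k : ℕ) : ℕ :=
  (π.filter (fun C =>
      (∃ B ∈ π, k ∈ B ∧ ∃ j ∈ B, k < j ∧ (∀ i ∈ B, k < i → j ≤ i) ∧
        (C ∩ Finset.Ioo k j).Nonempty)
      ∧ (C ∈ S ∨ (C ∩ Finset.Icc 1 k).Nonempty))).card

/-- The total number of right restricted crossings `rc(S,π) = Σ_{k=1}^n rc(k,S,π)` of an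
extended partition `(S,π)` of `{1,…,n}`. -/
noncomputable def rc (n : ℕ) (π S : Finset (Finset ℕ)) : ℕ :=
  ∑ k ∈ Finset.Icc 1 n, rcAt π S k

/-!
Passing from `∅` to `S` adds, at each `k`, exactly the blocks `C ∈ S` lying entirely to the right
of `k` that the arc leaving `k` passes over. Count these pairs `(k, C)` one block `C` at a time:
such a `k` is the last point before `C` of a block that continues past a point of `C`, so there
is exactly one for each block straddling `min C`.
-/

open Finset

def MeetsArc (π : Finset (Finset ℕ)) (k : ℕ) (C : Finset ℕ) : Prop :=
  ∃ B ∈ π, k ∈ B ∧ ∃ j ∈ B, k < j ∧ (∀ i ∈ B, k < i → j ≤ i) ∧ (C ∩ Ioo k j).Nonempty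

instance (π : Finset (Finset ℕ)) (k : ℕ) : DecidablePred (MeetsArc π k) :=
  fun _ => by unfold MeetsArc; infer_instance

lemma rcAt_eq_rcAt_empty_add {π S : Finset (Finset ℕ)} (hS : S ⊆ π) (k : ℕ) :
    rcAt π S k =
      rcAt π ∅ k + #{C ∈ S | MeetsArc π k C ∧ ¬(C ∩ Icc 1 k).Nonempty} := by
  rw [rcAt, rcAt, ← card_filter_add_card_filter_not (fun C => (C ∩ Icc 1 k).Nonempty),
    filter_filter, filter_filter]
  congr 2
  · ext C
    by_cases hQ : (C ∩ Icc 1 k).Nonempty <;> simp [hQ]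
  · ext C
    simp only [mem_filter]
    constructor
    · rintro ⟨-, ⟨hP, hSQ⟩, hQ⟩
      exact ⟨hSQ.resolve_right hQ, hP, hQ⟩
    · rintro ⟨hCS, hP, hQ⟩
      exact ⟨hS hCS, ⟨hP, .inl hCS⟩, hQ⟩

lemma not_nonempty_inter_Icc_iff {B : Finset ℕ} {n k : ℕ} (hB : B ⊆ Icc 1 n) :
    ¬(B ∩ Icc 1 k).Nonempty ↔ ∀ b ∈ B, k < b := by
  simp only [not_nonempty_iff_eq_empty, eq_empty_iff_forall_notMem, mem_inter, mem_Icc,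
    not_and, not_le]
  exact forall₂_congr fun b hb => by have := (mem_Icc.mp (hB hb)).1; omega

lemma meetsArc_iff {π : Finset (Finset ℕ)} (hdisj : ∀ B ∈ π, ∀ C ∈ π, B ≠ C → Disjoint B C)
    {B : Finset ℕ} {k : ℕ} (hB : B ∈ π) (hkB : ∀ b ∈ B, k < b) :
    MeetsArc π k B ↔ ∃ D ∈ π, k ∈ D ∧ (∃ c ∈ D, ∃ b ∈ B, b < c) ∧
      ∀ c ∈ D, (∀ b ∈ B, c < b) → c ≤ k := by
  constructor
  · rintro ⟨D, hD, hkD, j, hjD, -, hsucc, b, hb⟩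
    rw [mem_inter, mem_Ioo] at hb
    refine ⟨D, hD, hkD, ⟨j, hjD, b, hb.1, hb.2.2⟩, fun c hc hcB => ?_⟩
    by_contra! hkc
    have := hsucc c hc hkc
    have := hcB b hb.1
    omega
  · rintro ⟨D, hD, hkD, ⟨c, hcD, b, hbB, hbc⟩, hlast⟩
    obtain ⟨j, hj, hmin⟩ := (D.filter (k < ·)).exists_min_image id
      ⟨c, mem_filter.2 ⟨hcD, (hkB b hbB).trans hbc⟩⟩
    rw [mem_filter] at hj
    obtain ⟨b', hb'B, hb'j⟩ : ∃ b ∈ B, b ≤ j := by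
      by_contra! h
      exact (hlast j hj.1 h).not_gt hj.2
    have hDB : D ≠ B := fun h => (hkB k (h ▸ hkD)).false
    have hb'j : b' < j := hb'j.lt_of_ne fun h =>
      disjoint_left.mp (hdisj D hD B hB hDB) hj.1 (h ▸ hb'B)
    exact ⟨D, hD, hkD, j, hj.1, hj.2, fun i hi hki => hmin i (mem_filter.2 ⟨hi, hki⟩),
      b', mem_inter.2 ⟨hb'B, mem_Ioo.2 ⟨hkB b' hb'B, hb'j⟩⟩⟩

lemma card_meetsArc_eq_card_straddling {π : Finset (Finset ℕ)} {n : ℕ}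
    (hdisj : ∀ B ∈ π, ∀ C ∈ π, B ≠ C → Disjoint B C) (hsub : ∀ D ∈ π, D ⊆ Icc 1 n)
    {B : Finset ℕ} (hB : B ∈ π) :
    #{k ∈ Icc 1 n | MeetsArc π k B ∧ ¬(B ∩ Icc 1 k).Nonempty} =
      #{C ∈ π | (∃ c ∈ C, ∀ b ∈ B, c < b) ∧ ∃ c ∈ C, ∃ b ∈ B, b < c} := by
  have hbelow {k : ℕ} := not_nonempty_inter_Icc_iff (k := k) (hsub B hB)
  have hne : ∀ C ∈ π.filter (fun C => (∃ c ∈ C, ∀ b ∈ B, c < b) ∧ ∃ c ∈ C, ∃ b ∈ B, b < c),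
      (C.filter fun c => ∀ b ∈ B, c < b).Nonempty := fun C hC => by
    obtain ⟨c, hc, hcB⟩ := (mem_filter.1 hC).2.1
    exact ⟨c, mem_filter.2 ⟨hc, hcB⟩⟩
  symm
  refine card_bij (fun C hC => (C.filter fun c => ∀ b ∈ B, c < b).max' (hne C hC)) ?_ ?_ ?_
  · intro C hC
    obtain ⟨hCπ, -, hup⟩ := mem_filter.1 hC
    obtain ⟨hkC, hkB⟩ := mem_filter.1 (max'_mem _ (hne C hC))
    refine mem_filter.2 ⟨hsub C hCπ hkC, (meetsArc_iff hdisj hB hkB).2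
      ⟨C, hCπ, hkC, hup, fun c hc hcB => le_max' _ _ (mem_filter.2 ⟨hc, hcB⟩)⟩, hbelow.2 hkB⟩
  · intro C₁ hC₁ C₂ hC₂ heq
    by_contra hne₁₂
    refine disjoint_left.mp (hdisj C₁ (mem_filter.1 hC₁).1 C₂ (mem_filter.1 hC₂).1 hne₁₂)
      (mem_filter.1 (max'_mem _ (hne C₁ hC₁))).1 ?_
    rw [heq]
    exact (mem_filter.1 (max'_mem _ (hne C₂ hC₂))).1
  · intro k hk
    obtain ⟨-, hmeets, hnot⟩ := mem_filter.1 hk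
    have hkB := hbelow.1 hnot
    obtain ⟨D, hD, hkD, hup, hlast⟩ := (meetsArc_iff hdisj hB hkB).1 hmeets
    refine ⟨D, mem_filter.2 ⟨hD, ⟨k, hkD, hkB⟩, hup⟩, le_antisymm ?_ (le_max' _ _ ?_)⟩
    · exact max'_le _ _ _ fun c hc => hlast c (mem_filter.1 hc).1 (mem_filter.1 hc).2
    · exact mem_filter.2 ⟨hkD, hkB⟩

theorem rc_eq_rc_add_sum_general
    (n : ℕ) (π : Finset (Finset ℕ))
    (hdisj : ∀ B ∈ π, ∀ C ∈ π, B ≠ C → Disjoint B C)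
    (hcover : π.biUnion id = Finset.Icc 1 n)
    (S : Finset (Finset ℕ)) (hS : S ⊆ π) :
    rc n π S =
      rc n π ∅ +
        ∑ B ∈ S, (π.filter (fun C =>
          (∃ c ∈ C, ∀ b ∈ B, c < b) ∧ (∃ c ∈ C, ∃ b ∈ B, b < c))).card := by
  have hsub : ∀ D ∈ π, D ⊆ Icc 1 n := fun D hD => hcover ▸ subset_biUnion_of_mem id hD
  simp only [rc, rcAt_eq_rcAt_empty_add hS, sum_add_distrib, add_right_inj]
  exact (sum_card_bipartiteAbove_eq_sum_card_bipartiteBelow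
    (r := fun k C => MeetsArc π k C ∧ ¬(C ∩ Icc 1 k).Nonempty)).trans
    (sum_congr rfl fun B hB => card_meetsArc_eq_card_straddling hdisj hsub (hS hB))

/-- For every set partition `π` of `{1,…,n}` and every `S ⊆ π`,
`rc(S,π) = rc(π) + Σ_{B∈S} #{ C ∈ π : min(C) < min(B) < max(C) }`, where `rc(π) = rc(∅,π)`.
(The condition `min(C) < min(B)` is expressed as `∃ c ∈ C, ∀ b ∈ B, c < b` and
`min(B) < max(C)` as `∃ c ∈ C, ∃ b ∈ B, b < c`, which are equivalent for nonempty blocks.) -/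
theorem rc_eq_rc_add_sum
    (n : ℕ) (π : Finset (Finset ℕ))
    (hempty : ∅ ∉ π)
    (hdisj : ∀ B ∈ π, ∀ C ∈ π, B ≠ C → Disjoint B C)
    (hcover : π.biUnion id = Finset.Icc 1 n)
    (S : Finset (Finset ℕ)) (hS : S ⊆ π) :
    rc n π S =
      rc n π ∅ +
        ∑ B ∈ S, (π.filter (fun C =>
          (∃ c ∈ C, ∀ b ∈ B, c < b) ∧ (∃ c ∈ C, ∃ b ∈ B, b < c))).card :=
  rc_eq_rc_add_sum_general n π hdisj hcover S hS
end

section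
/- Let ξ₁,…,ξₙ ∈ H and let T₁,…,Tₙ : H → H be linear maps. Then the component in H^{⊗n} of (a(ξ₁)+a*(ξ₁)+p(T₁))·(a(ξ₂)+a*(ξ₂)+p(T₂))⋯(a(ξₙ)+a*(ξₙ)+p(Tₙ)) Ω equals ξ₁⊗ξ₂⊗⋯⊗ξₙ, and all components in H^{⊗m} for m > n vanish; that is, this vector equals ξ₁⊗⋯⊗ξₙ plus a vector in ⨁_{i=0}^{n−1} H^{⊗i}. (This is the key step showing that the vacuum vector Ω is cyclic for the algebra generated by the operators X(f) = a(ξ_f)+a*(ξ_f)+p(T_f).) -/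
open scoped BigOperators

noncomputable section

variable {H : Type*} [NormedAddCommGroup H] [InnerProductSpace ℂ H]

/-- The pure tensor `η₁ ⊗ ⋯ ⊗ η_m` in the algebraic Fock space `F_alg(H) = ⨁_m H^{⊗m}`,
realized as the product `ι(η₁)⋯ι(η_m)` in the tensor algebra of `H`; the empty list gives
the vacuum vector `Ω = 1`. -/
def fockTensor (l : List H) : TensorAlgebra ℂ H :=
  (l.map (TensorAlgebra.ι ℂ)).prod

/-- The span of pure tensors of length `< m`. -/
def fockSpan (m : ℕ) : Submodule ℂ (TensorAlgebra ℂ H) :=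
  Submodule.span ℂ {v : TensorAlgebra ℂ H | ∃ l : List H, l.length < m ∧ v = fockTensor l}

lemma fockTensor_mem_fockSpan {l : List H} {m : ℕ} (h : l.length < m) :
    fockTensor l ∈ (fockSpan m : Submodule ℂ (TensorAlgebra ℂ H)) :=
  Submodule.subset_span ⟨l, h, rfl⟩

section aux

variable (q : ℝ)
    (astar ann : H → Module.End ℂ (TensorAlgebra ℂ H))
    (gauge : Module.End ℂ H → Module.End ℂ (TensorAlgebra ℂ H))

lemma ann_mem (hann : ∀ (ζ : H) (l : List H),
      ann ζ (fockTensor l) =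
        ∑ k ∈ Finset.range l.length,
          ((q : ℂ) ^ k * inner ℂ ζ (l.getD k 0)) • fockTensor (l.eraseIdx k))
    (ζ : H) (l : List H) {m : ℕ} (h : l.length ≤ m) :
    ann ζ (fockTensor l) ∈ (fockSpan m : Submodule ℂ (TensorAlgebra ℂ H)) := by
  rw [hann]
  refine Submodule.sum_mem _ fun k hk => Submodule.smul_mem _ _ ?_
  rw [Finset.mem_range] at hk
  refine fockTensor_mem_fockSpan ?_
  have := List.length_eraseIdx_of_lt hk
  omega

lemma gauge_mem (hgauge : ∀ (S : Module.End ℂ H) (l : List H),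
      gauge S (fockTensor l) =
        ∑ k ∈ Finset.range l.length,
          (q : ℂ) ^ k • fockTensor (S (l.getD k 0) :: l.eraseIdx k))
    (S : Module.End ℂ H) (l : List H) {m : ℕ} (h : l.length < m) :
    gauge S (fockTensor l) ∈ (fockSpan m : Submodule ℂ (TensorAlgebra ℂ H)) := by
  rw [hgauge]
  refine Submodule.sum_mem _ fun k hk => Submodule.smul_mem _ _ ?_
  rw [Finset.mem_range] at hk
  refine fockTensor_mem_fockSpan ?_
  have := List.length_eraseIdx_of_lt hk
  simp only [List.length_cons]
  omega

lemma astar_mem (hastar : ∀ (ζ : H) (l : List H),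
      astar ζ (fockTensor l) = fockTensor (ζ :: l))
    (ζ : H) (l : List H) {m : ℕ} (h : l.length + 1 < m) :
    astar ζ (fockTensor l) ∈ (fockSpan m : Submodule ℂ (TensorAlgebra ℂ H)) := by
  rw [hastar]
  exact fockTensor_mem_fockSpan (by simpa using h)

lemma X_mem_span
    (hastar : ∀ (ζ : H) (l : List H), astar ζ (fockTensor l) = fockTensor (ζ :: l))
    (hann : ∀ (ζ : H) (l : List H),
      ann ζ (fockTensor l) =
        ∑ k ∈ Finset.range l.length,
          ((q : ℂ) ^ k * inner ℂ ζ (l.getD k 0)) • fockTensor (l.eraseIdx k))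
    (hgauge : ∀ (S : Module.End ℂ H) (l : List H),
      gauge S (fockTensor l) =
        ∑ k ∈ Finset.range l.length,
          (q : ℂ) ^ k • fockTensor (S (l.getD k 0) :: l.eraseIdx k))
    (ζ : H) (S : Module.End ℂ H) (m : ℕ) {w : TensorAlgebra ℂ H}
    (hw : w ∈ (fockSpan m : Submodule ℂ (TensorAlgebra ℂ H))) :
    (ann ζ + astar ζ + gauge S) w ∈ (fockSpan (m + 1) : Submodule ℂ (TensorAlgebra ℂ H)) := by
  have : (fockSpan m : Submodule ℂ (TensorAlgebra ℂ H)) ≤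
      Submodule.comap (ann ζ + astar ζ + gauge S) (fockSpan (m + 1)) := by
    rw [fockSpan, Submodule.span_le]
    rintro v ⟨l, hl, rfl⟩
    simp only [SetLike.mem_coe, Submodule.mem_comap, LinearMap.add_apply]
    refine Submodule.add_mem _ (Submodule.add_mem _ ?_ ?_) ?_
    · exact ann_mem q ann hann ζ l (by omega)
    · exact astar_mem astar hastar ζ l (by omega)
    · exact gauge_mem q gauge hgauge S l (by omega)
  exact this hw

end aux

/-- Let `ξ₁,…,ξₙ ∈ H` and `T₁,…,Tₙ : H → H` be linear.  For any operators
`a*`, `a`, `p` on the algebraic Fock space satisfying the defining relations of the creation,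
annihilation and gauge operators of the `q`-Fock space, the vector
`(a(ξ₁)+a*(ξ₁)+p(T₁))⋯(a(ξₙ)+a*(ξₙ)+p(Tₙ)) Ω` equals `ξ₁⊗⋯⊗ξₙ` plus a vector in
`⨁_{i=0}^{n−1} H^{⊗i}` (the span of pure tensors of length `< n`). -/
theorem product_on_vacuum_top_component (q : ℝ) (hq : -1 < q) (hq' : q < 1)
    (astar ann : H → Module.End ℂ (TensorAlgebra ℂ H))
    (gauge : Module.End ℂ H → Module.End ℂ (TensorAlgebra ℂ H))
    (hastar : ∀ (ζ : H) (l : List H), astar ζ (fockTensor l) = fockTensor (ζ :: l))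
    (hann : ∀ (ζ : H) (l : List H),
      ann ζ (fockTensor l) =
        ∑ k ∈ Finset.range l.length,
          ((q : ℂ) ^ k * inner ℂ ζ (l.getD k 0)) • fockTensor (l.eraseIdx k))
    (hgauge : ∀ (T : Module.End ℂ H) (l : List H),
      gauge T (fockTensor l) =
        ∑ k ∈ Finset.range l.length,
          (q : ℂ) ^ k • fockTensor (T (l.getD k 0) :: l.eraseIdx k))
    (n : ℕ) (ξ : Fin n → H) (T : Fin n → Module.End ℂ H) :
    ∃ w ∈ Submodule.span ℂ
        {v : TensorAlgebra ℂ H | ∃ l : List H, l.length < n ∧ v = fockTensor l},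
      ((List.ofFn (fun i : Fin n => ann (ξ i) + astar (ξ i) + gauge (T i))).prod)
          (fockTensor ([] : List H))
        = fockTensor (List.ofFn ξ) + w := by
  induction n with
  | zero =>
    refine ⟨0, Submodule.zero_mem _, ?_⟩
    simp [List.ofFn_zero, fockTensor]
  | succ n ih =>
    obtain ⟨w, hw, hwe⟩ := ih (fun i => ξ i.succ) (fun i => T i.succ)
    rw [List.ofFn_succ, List.prod_cons, Module.End.mul_apply, hwe]
    have hw' : w ∈ (fockSpan n : Submodule ℂ (TensorAlgebra ℂ H)) := hw
    set tail : List H := List.ofFn (fun i : Fin n => ξ i.succ) with htail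
    have htl : tail.length = n := by simp [htail]
    refine ⟨ann (ξ 0) (fockTensor tail) + gauge (T 0) (fockTensor tail)
      + (ann (ξ 0) + astar (ξ 0) + gauge (T 0)) w, ?_, ?_⟩
    · refine Submodule.add_mem _ (Submodule.add_mem _ ?_ ?_) ?_
      · exact ann_mem q ann hann (ξ 0) tail (by omega)
      · exact gauge_mem q gauge hgauge (T 0) tail (by omega)
      · exact X_mem_span q astar ann gauge hastar hann hgauge (ξ 0) (T 0) n hw'
    · simp only [map_add, LinearMap.add_apply, hastar (ξ 0) tail]
      rw [List.ofFn_succ]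
      abel
end
end
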